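/- arXiv:1903.08429 — 4 statements merged into one kernel-verified Lean document; each statement's English description precedes it below -/
import Mathlib

section
/- Let φ : ℂ → ℂ be a function on the right half-plane ℂ₊ = {s | 0 < re s} such that both s ↦ 2^(-φ(s)) and s ↦ 3^(-φ(s)) are holomorphic on ℂ₊ (where k^(-φ(s)) := exp(-φ(s) · Real.log k)). Then φ is holomorphic on ℂ₊. -/
lemma log23_aux_pos (m n : ℤ) (hn : 0 < n)
    (h : (m : ℝ) * Real.log 2 = n * Real.log 3) : False := by
  have hl2 : (0:ℝ) < Real.log 2 := Real.log_pos (by norm_num)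
  have hl3 : (0:ℝ) < Real.log 3 := Real.log_pos (by norm_num)
  have hm : 0 < m := by
    by_contra hm
    push_neg at hm
    have : (m : ℝ) * Real.log 2 ≤ 0 :=
      mul_nonpos_of_nonpos_of_nonneg (by exact_mod_cast hm) hl2.le
    nlinarith [mul_pos (show (0:ℝ) < n by exact_mod_cast hn) hl3]
  set a := m.toNat
  set b := n.toNat
  have ha : (a : ℝ) = (m : ℝ) := by
    exact_mod_cast congrArg Int.cast (Int.toNat_of_nonneg hm.le)
  have hb : (b : ℝ) = (n : ℝ) := by
    exact_mod_cast congrArg Int.cast (Int.toNat_of_nonneg hn.le)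
  have hlog : Real.log ((2:ℝ) ^ a) = Real.log ((3:ℝ) ^ b) := by
    rw [Real.log_pow, Real.log_pow, ha, hb]; exact h
  have hpow : (2:ℝ) ^ a = (3:ℝ) ^ b :=
    Real.log_injOn_pos (Set.mem_Ioi.mpr (by positivity))
      (Set.mem_Ioi.mpr (by positivity)) hlog
  have hnat : (2:ℕ) ^ a = 3 ^ b := by exact_mod_cast hpow
  have hb1 : 1 ≤ b := by omega
  have h3dvd : (3:ℕ) ∣ 2 ^ a := by
    rw [hnat]; exact dvd_pow_self 3 (by omega)
  have := (Nat.Prime.dvd_of_dvd_pow (p := 3) (by norm_num) h3dvd)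
  norm_num at this

lemma log23_aux (m n : ℤ) (h : (m : ℝ) * Real.log 2 = n * Real.log 3) : n = 0 := by
  rcases lt_trichotomy n 0 with hn | hn | hn
  · exact absurd (log23_aux_pos (-m) (-n) (by omega) (by push_cast; linarith)) (fun x => x)
  · exact hn
  · exact absurd (log23_aux_pos m n hn h) (fun x => x)

lemma near_one_slitPlane {z : ℂ} (hz : ‖z - 1‖ < 1) : z ∈ Complex.slitPlane := by
  rw [Complex.mem_slitPlane_iff]
  left
  have h1 : |(z - 1).re| ≤ ‖z - 1‖ := Complex.abs_re_le_norm _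
  have h2 : (z - 1).re = z.re - 1 := by simp
  rw [h2] at h1
  have := abs_le.mp h1
  linarith [this.1]

theorem stmt_4 (φ : ℂ → ℂ)
    (h2 : DifferentiableOn ℂ (fun s => Complex.exp (-(φ s) * (Real.log 2 : ℂ)))
      {s : ℂ | 0 < s.re})
    (h3 : DifferentiableOn ℂ (fun s => Complex.exp (-(φ s) * (Real.log 3 : ℂ)))
      {s : ℂ | 0 < s.re}) :
    DifferentiableOn ℂ φ {s : ℂ | 0 < s.re} := by
  have hl2 : (0:ℝ) < Real.log 2 := Real.log_pos (by norm_num)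
  have hl2c : ((Real.log 2 : ℝ) : ℂ) ≠ 0 := by exact_mod_cast hl2.ne'
  have hS : IsOpen {s : ℂ | 0 < s.re} := isOpen_lt continuous_const Complex.continuous_re
  intro s0 hs0
  suffices h : DifferentiableAt ℂ φ s0 from h.differentiableWithinAt
  set f2 : ℂ → ℂ := fun s => Complex.exp (-(φ s) * (Real.log 2 : ℂ)) with hf2def
  set f3 : ℂ → ℂ := fun s => Complex.exp (-(φ s) * (Real.log 3 : ℂ)) with hf3def
  have hf2ne : ∀ s, f2 s ≠ 0 := fun s => Complex.exp_ne_zero _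
  have hf3ne : ∀ s, f3 s ≠ 0 := fun s => Complex.exp_ne_zero _
  have hd2 : ∀ s ∈ {s : ℂ | 0 < s.re}, DifferentiableAt ℂ f2 s :=
    fun s hs => h2.differentiableAt (hS.mem_nhds hs)
  have hd3 : ∀ s ∈ {s : ℂ | 0 < s.re}, DifferentiableAt ℂ f3 s :=
    fun s hs => h3.differentiableAt (hS.mem_nhds hs)
  have hc2 : ContinuousAt f2 s0 := (hd2 s0 hs0).continuousAt
  have hc3 : ContinuousAt f3 s0 := (hd3 s0 hs0).continuousAt
  -- a ball around s0 where everything is nice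
  have hV : {s : ℂ | 0 < s.re} ∩ (f2 ⁻¹' Metric.ball (f2 s0) ‖f2 s0‖
      ∩ f3 ⁻¹' Metric.ball (f3 s0) ‖f3 s0‖) ∈ nhds s0 := by
    refine Filter.inter_mem (hS.mem_nhds hs0) (Filter.inter_mem ?_ ?_)
    · exact hc2 (Metric.ball_mem_nhds _ (norm_pos_iff.mpr (hf2ne s0)))
    · exact hc3 (Metric.ball_mem_nhds _ (norm_pos_iff.mpr (hf3ne s0)))
  obtain ⟨r, hr, hball⟩ := Metric.mem_nhds_iff.mp hV
  have hmem : ∀ s ∈ Metric.ball s0 r, s ∈ {s : ℂ | 0 < s.re} :=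
    fun s hs => (hball hs).1
  have hq2 : ∀ s ∈ Metric.ball s0 r, f2 s / f2 s0 ∈ Complex.slitPlane := by
    intro s hs
    apply near_one_slitPlane
    have hd : dist (f2 s) (f2 s0) < ‖f2 s0‖ := (hball hs).2.1
    rw [div_sub_one (hf2ne s0), norm_div]
    rw [div_lt_one (norm_pos_iff.mpr (hf2ne s0))]
    rwa [dist_eq_norm] at hd
  have hq3 : ∀ s ∈ Metric.ball s0 r, f3 s / f3 s0 ∈ Complex.slitPlane := by
    intro s hs
    apply near_one_slitPlane
    have hd : dist (f3 s) (f3 s0) < ‖f3 s0‖ := (hball hs).2.2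
    rw [div_sub_one (hf3ne s0), norm_div]
    rw [div_lt_one (norm_pos_iff.mpr (hf3ne s0))]
    rwa [dist_eq_norm] at hd
  set L2 : ℂ → ℂ := fun s => -(φ s0) * (Real.log 2 : ℂ) + Complex.log (f2 s / f2 s0) with hL2def
  set L3 : ℂ → ℂ := fun s => -(φ s0) * (Real.log 3 : ℂ) + Complex.log (f3 s / f3 s0) with hL3def
  have hL2diff : ∀ s ∈ Metric.ball s0 r, DifferentiableAt ℂ L2 s := by
    intro s hs
    exact (differentiableAt_const _).add (((hd2 s (hmem s hs)).div_const _).clog (hq2 s hs))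
  have hL3diff : ∀ s ∈ Metric.ball s0 r, DifferentiableAt ℂ L3 s := by
    intro s hs
    exact (differentiableAt_const _).add (((hd3 s (hmem s hs)).div_const _).clog (hq3 s hs))
  have hexpL2 : ∀ s ∈ Metric.ball s0 r, Complex.exp (L2 s) = f2 s := by
    intro s hs
    rw [hL2def]
    simp only
    rw [Complex.exp_add, Complex.exp_log (div_ne_zero (hf2ne s) (hf2ne s0))]
    rw [show Complex.exp (-(φ s0) * (Real.log 2 : ℂ)) = f2 s0 from rfl]
    rw [mul_comm, div_mul_cancel₀ _ (hf2ne s0)]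
  have hexpL3 : ∀ s ∈ Metric.ball s0 r, Complex.exp (L3 s) = f3 s := by
    intro s hs
    rw [hL3def]
    simp only
    rw [Complex.exp_add, Complex.exp_log (div_ne_zero (hf3ne s) (hf3ne s0))]
    rw [show Complex.exp (-(φ s0) * (Real.log 3 : ℂ)) = f3 s0 from rfl]
    rw [mul_comm, div_mul_cancel₀ _ (hf3ne s0)]
  have hn2 : ∀ s ∈ Metric.ball s0 r, ∃ n : ℤ,
      -(φ s) * (Real.log 2 : ℂ) - L2 s = n * (2 * Real.pi * Complex.I) := by
    intro s hs
    apply Complex.exp_eq_one_iff.mp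
    rw [Complex.exp_sub, hexpL2 s hs]
    exact div_self (hf2ne s)
  have hn3 : ∀ s ∈ Metric.ball s0 r, ∃ m : ℤ,
      -(φ s) * (Real.log 3 : ℂ) - L3 s = m * (2 * Real.pi * Complex.I) := by
    intro s hs
    apply Complex.exp_eq_one_iff.mp
    rw [Complex.exp_sub, hexpL3 s hs]
    exact div_self (hf3ne s)
  set K : ℂ → ℂ := fun s => L2 s * (Real.log 3 : ℂ) - L3 s * (Real.log 2 : ℂ) with hKdef
  have hKrep : ∀ s ∈ Metric.ball s0 r, ∃ n m : ℤ,
      K s = (2 * Real.pi * Complex.I) * ((m : ℂ) * (Real.log 2 : ℂ) - (n : ℂ) * (Real.log 3 : ℂ)) := by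
    intro s hs
    obtain ⟨n, hE2⟩ := hn2 s hs
    obtain ⟨m, hE3⟩ := hn3 s hs
    refine ⟨n, m, ?_⟩
    rw [hKdef]
    simp only
    linear_combination (-(Real.log 3 : ℂ)) * hE2 + (Real.log 2 : ℂ) * hE3
  have hKanalytic : AnalyticOnNhd ℂ K (Metric.ball s0 r) := by
    apply DifferentiableOn.analyticOnNhd _ Metric.isOpen_ball
    intro s hs
    exact (((hL2diff s hs).mul_const _).sub ((hL3diff s hs).mul_const _)).differentiableWithinAt
  have hKre : ∀ s ∈ Metric.ball s0 r, (K s).re = 0 := by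
    intro s hs
    obtain ⟨n, m, hK⟩ := hKrep s hs
    rw [hK]
    simp only [Complex.mul_re, Complex.mul_im, Complex.I_re, Complex.I_im,
      Complex.ofReal_re, Complex.ofReal_im, Complex.sub_re, Complex.sub_im,
      Complex.intCast_re, Complex.intCast_im, Complex.re_ofNat, Complex.im_ofNat]
    ring
  -- K is constant on the ball, by the open mapping theorem
  have hKconst : ∀ s ∈ Metric.ball s0 r, K s = K s0 := by
    rcases hKanalytic.is_constant_or_isOpen (convex_ball s0 r).isPreconnected with
      ⟨w, hw⟩ | hopen
    · intro s hs
      rw [hw s hs, hw s0 (Metric.mem_ball_self hr)]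
    · exfalso
      have hopen2 : IsOpen (K '' Metric.ball s0 r) :=
        hopen _ (subset_refl _) Metric.isOpen_ball
      have hKmem : K s0 ∈ K '' Metric.ball s0 r :=
        ⟨s0, Metric.mem_ball_self hr, rfl⟩
      obtain ⟨ε, hε, hsub⟩ := Metric.isOpen_iff.mp hopen2 _ hKmem
      have hmem2 : K s0 + (ε/2 : ℝ) ∈ K '' Metric.ball s0 r := by
        apply hsub
        rw [Metric.mem_ball, dist_eq_norm]
        simp only [add_sub_cancel_left]
        rw [Complex.norm_real, Real.norm_eq_abs, abs_of_pos (by linarith)]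
        linarith
      obtain ⟨s, hs, hKs⟩ := hmem2
      have h1 : (K s).re = 0 := hKre s hs
      have h0 : (K s0).re = 0 := hKre s0 (Metric.mem_ball_self hr)
      rw [hKs] at h1
      simp [Complex.add_re, h0] at h1
      linarith
  have hKs0 : K s0 = 0 := by
    rw [hKdef]
    simp only
    rw [hL2def, hL3def]
    simp only
    rw [div_self (hf2ne s0), div_self (hf3ne s0), Complex.log_one]
    ring
  -- conclude n = 0 and express φ
  have hphi : ∀ s ∈ Metric.ball s0 r, φ s = -L2 s / (Real.log 2 : ℂ) := by
    intro s hs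
    obtain ⟨n, hE2⟩ := hn2 s hs
    obtain ⟨m, hE3⟩ := hn3 s hs
    have hK0 : K s = 0 := by rw [hKconst s hs, hKs0]
    have hKeq : K s = (2 * Real.pi * Complex.I)
        * ((m : ℂ) * (Real.log 2 : ℂ) - (n : ℂ) * (Real.log 3 : ℂ)) := by
      rw [hKdef]
      simp only
      linear_combination (-(Real.log 3 : ℂ)) * hE2 + (Real.log 2 : ℂ) * hE3
    have hzero : (m : ℂ) * (Real.log 2 : ℂ) - (n : ℂ) * (Real.log 3 : ℂ) = 0 := by
      have htau : (2 * (Real.pi : ℂ) * Complex.I) ≠ 0 := by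
        simp [Complex.I_ne_zero, Real.pi_ne_zero]
      rw [hK0] at hKeq
      exact (mul_eq_zero.mp hKeq.symm).resolve_left htau
    have hreal : (m : ℝ) * Real.log 2 = n * Real.log 3 := by
      have := sub_eq_zero.mp hzero
      exact_mod_cast this
    have hn0 : n = 0 := log23_aux m n hreal
    rw [hn0] at hE2
    push_cast at hE2
    rw [zero_mul] at hE2
    have hLs : L2 s = -(φ s) * ((Real.log 2 : ℝ) : ℂ) := by linear_combination -hE2
    rw [hLs, neg_mul, neg_neg, mul_div_assoc, div_self hl2c, mul_one]
  have hEq : φ =ᶠ[nhds s0] fun s => -L2 s / (Real.log 2 : ℂ) :=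
    Filter.eventuallyEq_of_mem (Metric.ball_mem_nhds s0 hr) hphi
  have hdiff : DifferentiableAt ℂ (fun s => -L2 s / (Real.log 2 : ℂ)) s0 :=
    ((hL2diff s0 (Metric.mem_ball_self hr)).neg).div_const _
  exact hdiff.congr_of_eventuallyEq hEq
end

section
/- Let a, b : ℕ → ℂ and let c₀ ∈ ℕ, c₀ ≥ 1. Suppose ∑_n |a n| n^(-σ) < ∞ and ∑_m |b m| m^(-σ) < ∞ for some σ ∈ ℝ, and suppose that for all s with re s > σ, 2^{c₀ s} · ∑_n a n · n^(-s) = 3^{c₀ s} · ∑_m b m · m^(-s). Then a n = 0 for every n that is not a multiple of 2^{c₀}; consequently the common function φ(s) = 2^{c₀ s} ∑_n a n n^{-s} equals the absolutely convergent Dirichlet series ∑_{j≥1} a(j·2^{c₀}) · j^(-s) on {s | re s > σ}. -/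
open LSeries Complex Filter Topology Function

/-- tsum over an injection whose range contains the support. -/
lemma my_tsum_comp_eq {f : ℕ → ℂ} {g : ℕ → ℕ} (hg : Function.Injective g)
    (hf : ∀ x ∉ Set.range g, f x = 0) : ∑' j, f (g j) = ∑' x, f x := by
  by_cases h : Summable f
  · exact ((hg.hasSum_iff hf).mpr h.hasSum).tsum_eq
  · rw [tsum_eq_zero_of_not_summable h]
    exact tsum_eq_zero_of_not_summable (fun hs => h ((hg.summable_iff hf).mp hs))

/-- Uniqueness core: if the L-series of `f` vanishes on `[x₀,∞)` and is summable at `x₀`,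
then all coefficients (for positive index) vanish. -/
lemma my_unique {f : ℕ → ℂ} {x₀ : ℝ} (hf : LSeriesSummable f (x₀ : ℂ))
    (h0 : ∀ y : ℝ, x₀ ≤ y → LSeries f (y : ℂ) = 0) :
    ∀ n, 1 ≤ n → f n = 0 := by
  suffices H : ∀ n : ℕ, (∀ m, m < n → 1 ≤ m → f m = 0) → (1 ≤ n → f n = 0) by
    intro n
    exact Nat.strong_induction_on (p := fun n => 1 ≤ n → f n = 0) n H
  intro n ih hn
  have hnpos : 0 < n := hn
  have hnC : (n : ℂ) ≠ 0 := Nat.cast_ne_zero.mpr hnpos.ne'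
  have hfn : Summable fun m => ‖term f (x₀ : ℂ) m‖ := summable_norm_iff.mpr hf
  have hbsum : Summable fun m => (n : ℝ) ^ x₀ * ‖term f (x₀ : ℂ) m‖ := hfn.mul_left _
  have hnormpow : ∀ y : ℝ, ‖(n : ℂ) ^ (y : ℂ)‖ = (n : ℝ) ^ y := by
    intro y
    rw [norm_natCast_cpow_of_pos hnpos, Complex.ofReal_re]
  have key : Tendsto (fun y : ℝ => ∑' m, (n : ℂ) ^ (y : ℂ) * term f (y : ℂ) m)
      atTop (𝓝 (f n)) := by
    have main := tendsto_tsum_of_dominated_convergence (𝓕 := atTop)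
      (f := fun (y : ℝ) (m : ℕ) => (n : ℂ) ^ (y : ℂ) * term f (y : ℂ) m)
      (g := fun m => if m = n then f n else 0)
      (bound := fun m => (n : ℝ) ^ x₀ * ‖term f (x₀ : ℂ) m‖) hbsum ?_ ?_
    · simpa using main
    · intro m
      rcases eq_or_ne m n with rfl | hmn
      · simp only [if_pos rfl]
        have hconst : ∀ y : ℝ, (m : ℂ) ^ (y : ℂ) * term f (y : ℂ) m = f m := by
          intro y
          have hne : (m : ℂ) ^ (y : ℂ) ≠ 0 := by
            simp [Complex.cpow_eq_zero_iff, hnC]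
          rw [term_of_ne_zero hnpos.ne', mul_comm, div_mul_cancel₀ _ hne]
        simpa [hconst] using tendsto_const_nhds (x := f m) (f := atTop (α := ℝ))
      · simp only [if_neg hmn]
        rcases eq_or_ne m 0 with rfl | hm0
        · simpa [term_zero] using tendsto_const_nhds (x := (0:ℂ)) (f := atTop (α := ℝ))
        rcases lt_or_gt_of_ne hmn with hlt | hgt
        · -- m < n, m ≥ 1 : f m = 0
          have hfm : f m = 0 := ih m hlt (Nat.one_le_iff_ne_zero.mpr hm0)
          simpa [term_of_ne_zero hm0, hfm] using
            tendsto_const_nhds (x := (0:ℂ)) (f := atTop (α := ℝ))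
        · -- m > n : term decays
          have hmpos : 0 < m := hnpos.trans hgt
          rw [tendsto_zero_iff_norm_tendsto_zero]
          have hq0 : (0:ℝ) < (n : ℝ) / m := by positivity
          have hq1 : (n : ℝ) / m < 1 := by
            rw [div_lt_one (by positivity)]
            exact_mod_cast hgt
          have hlim : Tendsto (fun y : ℝ => ‖f m‖ * ((n : ℝ) / m) ^ y) atTop (𝓝 0) := by
            simpa using (tendsto_rpow_atTop_of_base_lt_one _ (by linarith) hq1).const_mul ‖f m‖
          refine hlim.congr fun y => ?_
          rw [norm_mul, hnormpow, norm_term_eq, if_neg hm0, Complex.ofReal_re,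
            Real.div_rpow (Nat.cast_nonneg n) (Nat.cast_nonneg m)]
          ring
    · filter_upwards [eventually_ge_atTop x₀] with y hy
      intro m
      rcases eq_or_ne m 0 with rfl | hm0
      · simp [term_zero]
      rcases lt_or_ge m n with hlt | hge
      · have hfm : f m = 0 := ih m hlt (Nat.one_le_iff_ne_zero.mpr hm0)
        simp [term_of_ne_zero hm0, hfm]
      · have hmpos : 0 < m := hnpos.trans_le hge
        rw [norm_mul, hnormpow, norm_term_eq, if_neg hm0, Complex.ofReal_re,
          norm_term_eq, if_neg hm0, Complex.ofReal_re]
        have hq0 : (0:ℝ) < (n : ℝ) / m := by positivity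
        have hq1 : (n : ℝ) / m ≤ 1 := by
          rw [div_le_one (by positivity)]
          exact_mod_cast hge
        have hkey : ((n : ℝ) / m) ^ y ≤ ((n : ℝ) / m) ^ x₀ :=
          Real.rpow_le_rpow_of_exponent_ge hq0 hq1 hy
        have e1 : ∀ z : ℝ, (n : ℝ) ^ z * (‖f m‖ / (m : ℝ) ^ z)
            = ‖f m‖ * ((n : ℝ) / m) ^ z := by
          intro z
          rw [Real.div_rpow (Nat.cast_nonneg n) (Nat.cast_nonneg m)]
          ring
        rw [e1, e1]
        exact mul_le_mul_of_nonneg_left hkey (norm_nonneg _)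
  have zero : Tendsto (fun y : ℝ => ∑' m, (n : ℂ) ^ (y : ℂ) * term f (y : ℂ) m)
      atTop (𝓝 0) := by
    refine Tendsto.congr' ?_ (tendsto_const_nhds (x := (0:ℂ)))
    filter_upwards [eventually_ge_atTop x₀] with y hy
    rw [tsum_mul_left]
    rw [show ∑' m, term f (y : ℂ) m = LSeries f (y : ℂ) from rfl, h0 y hy, mul_zero]
  exact tendsto_nhds_unique key zero

lemma my_eq {f g : ℕ → ℂ} {x₀ : ℝ} (hf : LSeriesSummable f (x₀ : ℂ))
    (hg : LSeriesSummable g (x₀ : ℂ))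
    (h : ∀ y : ℝ, x₀ ≤ y → LSeries f (y : ℂ) = LSeries g (y : ℂ)) :
    ∀ n, 1 ≤ n → f n = g n := by
  have h' : ∀ y : ℝ, x₀ ≤ y → LSeries (f - g) (y : ℂ) = 0 := fun y hy => by
    rw [LSeries_sub (hf.of_re_le_re (by simpa using hy)) (hg.of_re_le_re (by simpa using hy)),
      h y hy, sub_self]
  intro n hn
  have := my_unique (hf.sub hg) h' n hn
  rw [Pi.sub_apply] at this
  exact sub_eq_zero.mp this

/-- cpow of a product of naturals splits. -/
lemma my_cpow_split (p q : ℕ) (s : ℂ) :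
    ((p * q : ℕ) : ℂ) ^ s = ((p : ℕ) : ℂ) ^ s * ((q : ℕ) : ℂ) ^ s := by
  rw [Nat.cast_mul, show ((p : ℕ) : ℂ) = ((p : ℝ) : ℂ) by push_cast; ring,
    show ((q : ℕ) : ℂ) = ((q : ℝ) : ℂ) by push_cast; ring,
    Complex.mul_cpow_ofReal_nonneg (Nat.cast_nonneg p) (Nat.cast_nonneg q)]

lemma my_cpow_exp (M : ℕ) (hM : M ≠ 0) (s : ℂ) :
    ((M : ℕ) : ℂ) ^ (-s) = Complex.exp (-(s * (Real.log M : ℂ))) := by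
  rw [Complex.cpow_def_of_ne_zero (by exact_mod_cast hM),
    show ((M : ℕ) : ℂ) = ((M : ℝ) : ℂ) by push_cast; ring,
    Complex.ofReal_log (Nat.cast_nonneg M)]
  congr 1
  ring

section helper

variable {σ : ℝ} {c : ℕ → ℂ} {M : ℕ}

lemma my_inj (hM : 1 ≤ M) : Function.Injective (fun j : ℕ => (j + 1) * M) := by
  intro x y h
  simp only at h
  have := Nat.eq_of_mul_eq_mul_right (show 0 < M from hM) h
  omega

lemma my_supp (hM : 1 ≤ M) {k : ℕ} (hk : k ∉ Set.range (fun j : ℕ => (j + 1) * M)) :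
    k = 0 ∨ ¬ M ∣ k := by
  rcases eq_or_ne k 0 with rfl | hk0
  · exact Or.inl rfl
  · refine Or.inr fun ⟨t, ht⟩ => hk ⟨t - 1, ?_⟩
    have ht1 : 1 ≤ t := by
      rcases Nat.eq_zero_or_pos t with rfl | h
      · omega
      · exact h
    simp only
    rw [Nat.sub_add_cancel ht1, mul_comm]
    omega

lemma my_term_supp (hM : 1 ≤ M) (s : ℂ) {k : ℕ}
    (hk : k ∉ Set.range (fun j : ℕ => (j + 1) * M)) :
    term (fun k => if M ∣ k then c (k / M) else 0) s k = 0 := by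
  rcases my_supp hM hk with rfl | hdvd
  · simp
  · rcases eq_or_ne k 0 with rfl | hk0
    · simp
    · rw [term_of_ne_zero hk0, if_neg hdvd, zero_div]

lemma my_term_val (hM : 1 ≤ M) (s : ℂ) (j : ℕ) :
    term (fun k => if M ∣ k then c (k / M) else 0) s ((j + 1) * M)
      = c (j + 1) * ((j + 1 : ℕ) : ℂ) ^ (-s) * ((M : ℕ) : ℂ) ^ (-s) := by
  have hne : (j + 1) * M ≠ 0 := by positivity
  rw [term_of_ne_zero hne, if_pos (dvd_mul_left M (j + 1)),
    Nat.mul_div_cancel _ (show 0 < M from hM), div_eq_mul_inv, ← Complex.cpow_neg,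
    my_cpow_split, mul_assoc]

/-- Summability of the dilated coefficient function. -/
lemma my_lsummable (hM : 1 ≤ M) {x₀ : ℝ} (hσx : σ ≤ x₀) (h0x : 0 ≤ x₀)
    (hc : Summable (fun n : ℕ => ‖c (n + 1)‖ * ((n + 1 : ℝ)) ^ (-σ))) :
    LSeriesSummable (fun k => if M ∣ k then c (k / M) else 0) (x₀ : ℂ) := by
  rw [LSeriesSummable, ← summable_norm_iff]
  refine ((my_inj hM).summable_iff fun k hk => ?_).mp ?_
  · rw [my_term_supp hM _ hk, norm_zero]
  · refine hc.of_nonneg_of_le (fun j => norm_nonneg _) fun j => ?_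
    rw [show ((fun m => ‖term (fun k => if M ∣ k then c (k / M) else 0) ((x₀ : ℝ) : ℂ) m‖) ∘ (fun j : ℕ => (j + 1) * M)) j = ‖term (fun k => if M ∣ k then c (k / M) else 0) ((x₀ : ℝ) : ℂ) ((j + 1) * M)‖ from rfl, my_term_val hM]
    have h1 : (1 : ℝ) ≤ (j + 1 : ℝ) := by exact_mod_cast Nat.one_le_iff_ne_zero.mpr (Nat.succ_ne_zero j)
    have hjM : ((j + 1 : ℝ)) ≤ ((j + 1) * M : ℕ) := by
      push_cast
      nlinarith [show (1:ℝ) ≤ (M:ℝ) from by exact_mod_cast hM]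
    have key : ((j + 1 : ℝ)) ^ σ ≤ (((j + 1) * M : ℕ) : ℝ) ^ x₀ :=
      (Real.rpow_le_rpow_of_exponent_le h1 hσx).trans
        (Real.rpow_le_rpow (by positivity) hjM h0x)
    have hnorm : ‖c (j + 1) * ((j + 1 : ℕ) : ℂ) ^ (-(x₀ : ℂ)) * ((M : ℕ) : ℂ) ^ (-(x₀ : ℂ))‖
        = ‖c (j + 1)‖ / (((j + 1) * M : ℕ) : ℝ) ^ x₀ := by
      rw [mul_assoc, ← my_cpow_split, norm_mul,
        Complex.norm_natCast_cpow_of_pos (by positivity) (-(x₀ : ℂ))]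
      simp only [Complex.neg_re, Complex.ofReal_re]
      rw [Real.rpow_neg (by positivity), div_eq_mul_inv]
    rw [hnorm]
    calc ‖c (j + 1)‖ / (((j + 1) * M : ℕ) : ℝ) ^ x₀
        ≤ ‖c (j + 1)‖ / ((j + 1 : ℝ)) ^ σ := by
          gcongr
      _ = ‖c (j + 1)‖ * ((j + 1 : ℝ)) ^ (-σ) := by
          rw [Real.rpow_neg (by positivity), div_eq_mul_inv]

/-- The L-series of the dilated coefficients as a multiple of the original Dirichlet series. -/
lemma my_lseries (hM : 1 ≤ M) (s : ℂ) :
    LSeries (fun k => if M ∣ k then c (k / M) else 0) s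
      = (∑' n : ℕ, c (n + 1) * ((n + 1 : ℕ) : ℂ) ^ (-s)) * ((M : ℕ) : ℂ) ^ (-s) := by
  rw [LSeries, ← my_tsum_comp_eq (my_inj hM) (fun k hk => my_term_supp hM s hk),
    ← tsum_mul_right]
  exact tsum_congr fun j => my_term_val hM s j

end helper

theorem stmt_11 (a b : ℕ → ℂ) (c₀ : ℕ) (hc₀ : 1 ≤ c₀) (σ : ℝ)
    (ha : Summable (fun n : ℕ => ‖a (n + 1)‖ * ((n + 1 : ℝ)) ^ (-σ)))
    (hb : Summable (fun n : ℕ => ‖b (n + 1)‖ * ((n + 1 : ℝ)) ^ (-σ)))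
    (heq : ∀ s : ℂ, σ < s.re →
      Complex.exp ((c₀ : ℂ) * s * (Real.log 2 : ℂ)) *
        ∑' n : ℕ, a (n + 1) * ((n + 1 : ℕ) : ℂ) ^ (-s) =
      Complex.exp ((c₀ : ℂ) * s * (Real.log 3 : ℂ)) *
        ∑' n : ℕ, b (n + 1) * ((n + 1 : ℕ) : ℂ) ^ (-s)) :
    (∀ n : ℕ, 1 ≤ n → ¬ (2 ^ c₀ ∣ n) → a n = 0) ∧
    (∀ s : ℂ, σ < s.re →
      Complex.exp ((c₀ : ℂ) * s * (Real.log 2 : ℂ)) *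
        ∑' n : ℕ, a (n + 1) * ((n + 1 : ℕ) : ℂ) ^ (-s) =
      ∑' j : ℕ, a ((j + 1) * 2 ^ c₀) * ((j + 1 : ℕ) : ℂ) ^ (-s)) := by
  -- basic exponent facts
  have h2 : (1 : ℕ) ≤ 2 ^ c₀ := Nat.one_le_two_pow
  have h3 : (1 : ℕ) ≤ 3 ^ c₀ := Nat.one_le_pow _ _ (by norm_num)
  have hlog2 : ((Real.log ((2 ^ c₀ : ℕ) : ℝ) : ℝ) : ℂ) = (c₀ : ℂ) * (Real.log 2 : ℂ) := by
    push_cast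
    rw [Real.log_pow]
    push_cast
    ring
  have hlog3 : ((Real.log ((3 ^ c₀ : ℕ) : ℝ) : ℝ) : ℂ) = (c₀ : ℂ) * (Real.log 3 : ℂ) := by
    push_cast
    rw [Real.log_pow]
    push_cast
    ring
  have hpow2 : ∀ s : ℂ, (((2 ^ c₀ : ℕ) : ℂ)) ^ (-s)
      = Complex.exp (-(s * ((c₀ : ℂ) * (Real.log 2 : ℂ)))) := by
    intro s
    rw [my_cpow_exp _ (by positivity) s, hlog2]
  have hpow3 : ∀ s : ℂ, (((3 ^ c₀ : ℕ) : ℂ)) ^ (-s)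
      = Complex.exp (-(s * ((c₀ : ℂ) * (Real.log 3 : ℂ)))) := by
    intro s
    rw [my_cpow_exp _ (by positivity) s, hlog3]
  have hexp2 : ∀ s : ℂ, Complex.exp ((c₀ : ℂ) * s * (Real.log 2 : ℂ)) *
      Complex.exp (-(s * ((c₀ : ℂ) * (Real.log 2 : ℂ)))) = 1 := by
    intro s
    rw [← Complex.exp_add, show (c₀ : ℂ) * s * (Real.log 2 : ℂ)
      + -(s * ((c₀ : ℂ) * (Real.log 2 : ℂ))) = 0 by ring, Complex.exp_zero]
  have hexp3 : ∀ s : ℂ, Complex.exp ((c₀ : ℂ) * s * (Real.log 3 : ℂ)) *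
      Complex.exp (-(s * ((c₀ : ℂ) * (Real.log 3 : ℂ)))) = 1 := by
    intro s
    rw [← Complex.exp_add, show (c₀ : ℂ) * s * (Real.log 3 : ℂ)
      + -(s * ((c₀ : ℂ) * (Real.log 3 : ℂ))) = 0 by ring, Complex.exp_zero]
  -- the two rearranged coefficient functions
  set A : ℕ → ℂ := fun k => if 3 ^ c₀ ∣ k then a (k / 3 ^ c₀) else 0 with hA
  set B : ℕ → ℂ := fun k => if 2 ^ c₀ ∣ k then b (k / 2 ^ c₀) else 0 with hB
  set x₀ : ℝ := max σ 0 + 1 with hx₀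
  have hσx : σ ≤ x₀ := by
    have : σ ≤ max σ 0 := le_max_left _ _
    linarith
  have h0x : (0 : ℝ) ≤ x₀ := by
    have : (0:ℝ) ≤ max σ 0 := le_max_right _ _
    linarith
  have hAB : ∀ k : ℕ, 1 ≤ k → A k = B k := by
    refine my_eq (my_lsummable h3 hσx h0x ha) (my_lsummable h2 hσx h0x hb) fun y hy => ?_
    have hyσ : σ < ((y : ℝ) : ℂ).re := by
      simp only [Complex.ofReal_re]
      have := le_max_left σ 0
      rw [hx₀] at hy
      linarith
    have H := heq (y : ℂ) hyσ
    have H2 := hexp2 ((y : ℝ) : ℂ)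
    have H3 := hexp3 ((y : ℝ) : ℂ)
    rw [hA, hB, my_lseries h3, my_lseries h2, hpow3, hpow2]
    linear_combination (Complex.exp (-(((y : ℝ) : ℂ) * ((c₀ : ℂ) * (Real.log 2 : ℂ))))
        * Complex.exp (-(((y : ℝ) : ℂ) * ((c₀ : ℂ) * (Real.log 3 : ℂ))))) * H
      - ((∑' n : ℕ, a (n + 1) * ((n + 1 : ℕ) : ℂ) ^ (-((y : ℝ) : ℂ)))
        * Complex.exp (-(((y : ℝ) : ℂ) * ((c₀ : ℂ) * (Real.log 3 : ℂ))))) * H2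
      + ((∑' n : ℕ, b (n + 1) * ((n + 1 : ℕ) : ℂ) ^ (-((y : ℝ) : ℂ)))
        * Complex.exp (-(((y : ℝ) : ℂ) * ((c₀ : ℂ) * (Real.log 2 : ℂ))))) * H3
  -- part 1
  have part1 : ∀ n : ℕ, 1 ≤ n → ¬ (2 ^ c₀ ∣ n) → a n = 0 := by
    intro n hn hnd
    have hk : 1 ≤ n * 3 ^ c₀ := Nat.mul_pos hn (show 0 < 3 ^ c₀ from h3)
    have h := hAB (n * 3 ^ c₀) hk
    have hAval : A (n * 3 ^ c₀) = a n := by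
      rw [hA]
      simp only
      rw [if_pos (dvd_mul_left _ _), Nat.mul_div_cancel _ (show 0 < 3 ^ c₀ from h3)]
    have hBval : B (n * 3 ^ c₀) = 0 := by
      rw [hB]
      simp only
      rw [if_neg]
      intro hdvd
      have hcop : Nat.Coprime (2 ^ c₀) (3 ^ c₀) :=
        Nat.Coprime.pow c₀ c₀ (by decide)
      exact hnd (hcop.dvd_of_dvd_mul_right hdvd)
    rw [hAval, hBval] at h
    exact h
  refine ⟨part1, fun s hs => ?_⟩
  -- part 2
  set i : ℕ → ℕ := fun j => (j + 1) * 2 ^ c₀ - 1 with hi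
  have hi1 : ∀ j, i j + 1 = (j + 1) * 2 ^ c₀ := by
    intro j
    have : 1 ≤ (j + 1) * 2 ^ c₀ := Nat.mul_pos (Nat.succ_pos j) (show 0 < 2 ^ c₀ from h2)
    simp only [hi]
    omega
  have hiinj : Function.Injective i := by
    intro x y h
    have hx := hi1 x
    have hy := hi1 y
    have : (x + 1) * 2 ^ c₀ = (y + 1) * 2 ^ c₀ := by omega
    have := Nat.eq_of_mul_eq_mul_right (show 0 < 2 ^ c₀ from h2) this
    omega
  have hisupp : ∀ n : ℕ, n ∉ Set.range i →
      a (n + 1) * ((n + 1 : ℕ) : ℂ) ^ (-s) = 0 := by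
    intro n hn
    have hnd : ¬ (2 ^ c₀ ∣ (n + 1)) := by
      intro ⟨t, ht⟩
      have ht1 : 1 ≤ t := by
        rcases Nat.eq_zero_or_pos t with rfl | h
        · omega
        · exact h
      rw [mul_comm] at ht
      refine hn ⟨t - 1, ?_⟩
      have := hi1 (t - 1)
      have htt : (t - 1 + 1) = t := by omega
      rw [htt] at this
      omega
    rw [part1 (n + 1) (by omega) hnd, zero_mul]
  have key : ∑' n : ℕ, a (n + 1) * ((n + 1 : ℕ) : ℂ) ^ (-s)
      = (∑' j : ℕ, a ((j + 1) * 2 ^ c₀) * ((j + 1 : ℕ) : ℂ) ^ (-s))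
        * ((2 ^ c₀ : ℕ) : ℂ) ^ (-s) := by
    rw [← my_tsum_comp_eq hiinj hisupp, ← tsum_mul_right]
    refine tsum_congr fun j => ?_
    rw [hi1 j, my_cpow_split, mul_comm ((((j+1) : ℕ) : ℂ) ^ (-s)) _]
    ring
  rw [key, hpow2]
  linear_combination (∑' j : ℕ, a ((j + 1) * 2 ^ c₀) * ((j + 1 : ℕ) : ℂ) ^ (-s)) * hexp2 s
end

section
/- Let D(s) = ∑_{n≥1} a n · n^(-s) be a Dirichlet series converging on {s | re s > σ} that is not constant, and assume a 1 ≠ 0 is allowed. Then |a 1| < sup_{re s > σ} |D(s)|. -/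
/-!
Let `k ≥ 2` be the first index with `a k ≠ 0`. Along real `x → ∞`,
`k ^ x * (D(x + it) - a 1) → a k * k ^ (-it)`, and `t` can be chosen so that this limit points in
the direction of `a 1`. For large `x` the correction `D(x + it) - a 1` then lengthens `a 1`,
so `‖a 1‖ < ‖D(x + it)‖`.
-/

open Complex Filter LSeries Topology

namespace LSeries

lemma term_mul_cpow_neg (f : ℕ → ℂ) (s w : ℂ) :
    term (fun n ↦ f n * (n : ℂ) ^ (-w)) s = term f (s + w) := by
  ext n
  rcases eq_or_ne n 0 with rfl | hn
  · simp
  have hn' : (n : ℂ) ≠ 0 := Nat.cast_ne_zero.mpr hn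
  rw [term_of_ne_zero hn, term_of_ne_zero hn, cpow_add _ _ hn', cpow_neg]
  field_simp

lemma LSeries_mul_cpow_neg (f : ℕ → ℂ) (s w : ℂ) :
    LSeries (fun n ↦ f n * (n : ℂ) ^ (-w)) s = LSeries f (s + w) :=
  congrArg tsum (term_mul_cpow_neg f s w)

lemma LSeriesSummable_mul_cpow_neg_iff (f : ℕ → ℂ) (s w : ℂ) :
    LSeriesSummable (fun n ↦ f n * (n : ℂ) ^ (-w)) s ↔ LSeriesSummable f (s + w) := by
  rw [LSeriesSummable, LSeriesSummable, term_mul_cpow_neg]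

lemma term_add_one (f : ℕ → ℂ) (s : ℂ) (n : ℕ) :
    term f s (n + 1) = f (n + 1) * ((n + 1 : ℕ) : ℂ) ^ (-s) := by
  rw [term_of_ne_zero n.succ_ne_zero, cpow_neg, div_eq_mul_inv]

lemma tsum_add_one_eq_LSeries (f : ℕ → ℂ) (s : ℂ) :
    ∑' n : ℕ, f (n + 1) * ((n + 1 : ℕ) : ℂ) ^ (-s) = LSeries f s := by
  simp_rw [← term_add_one]
  refine (add_left_injective 1).tsum_eq fun n hn ↦ ?_
  obtain ⟨m, rfl⟩ := Nat.exists_eq_succ_of_ne_zero (n := n) <| by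
    rintro rfl; exact hn (term_zero f s)
  exact ⟨m, rfl⟩

lemma summable_add_one_iff_LSeriesSummable (f : ℕ → ℂ) (s : ℂ) :
    Summable (fun n : ℕ ↦ f (n + 1) * ((n + 1 : ℕ) : ℂ) ^ (-s)) ↔ LSeriesSummable f s := by
  simp_rw [← term_add_one]
  exact summable_nat_add_iff 1

lemma tendsto_rpow_mul_sub_atTop {f : ℕ → ℂ} {k : ℕ} (hk : 2 ≤ k)
    (hf : ∀ m, 2 ≤ m → m < k → f m = 0) (ha : abscissaOfAbsConv f < ⊤) :
    Tendsto (fun x : ℝ ↦ (((k : ℝ) ^ x : ℝ) : ℂ) * (LSeries f x - f 1)) atTop (𝓝 (f k)) := by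
  set g : ℕ → ℂ := fun n ↦ if n ≤ 1 then 0 else f n with hg
  have hfg : f =ᶠ[atTop] g := eventually_atTop.mpr ⟨2, fun n hn ↦ by simp [hg]; omega⟩
  have hga : abscissaOfAbsConv g < ⊤ := abscissaOfAbsConv_congr' hfg ▸ ha
  have hg0 : ∀ m ≤ k - 1, g m = 0 := fun m hm ↦ by
    by_cases h : m ≤ 1
    · simp [hg, h]
    · simp only [hg, h, if_false]; exact hf m (by omega) (by omega)
  have hLfg : ∀ᶠ x : ℝ in atTop, LSeries f x - f 1 = LSeries g x := by
    obtain ⟨y, hy, -⟩ := EReal.exists_between_coe_real ha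
    filter_upwards [eventually_ge_atTop y] with x hx
    have hsum : LSeriesSummable f x :=
      LSeriesSummable_of_abscissaOfAbsConv_lt_re <| by
        simpa using hy.trans_le (by exact_mod_cast hx)
    have hf1 : term f x 1 = f 1 := by simp [term_of_ne_zero]
    rw [LSeries, hsum.tsum_eq_add_tsum_ite 1, hf1, add_sub_cancel_left, LSeries]
    congr 1
    ext n
    rcases Nat.lt_trichotomy n 1 with h | rfl | h
    · simp [Nat.lt_one_iff.mp h]
    · simp [term_of_ne_zero, hg]
    · simp [term_of_ne_zero, hg, h.ne', (zero_lt_one.trans h).ne', h.not_ge]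
  have hlim := tendsto_cpow_mul_atTop hg0 hga
  have hk1 : ((k - 1 : ℕ) : ℂ) + 1 = k := by
    rw [Nat.cast_sub (by omega)]; ring
  rw [hk1, Nat.sub_add_cancel (by omega : 1 ≤ k)] at hlim
  rw [show g k = f k by simp [hg]; omega] at hlim
  refine hlim.congr' ?_
  filter_upwards [hLfg] with x hx
  rw [hx, ofReal_cpow (Nat.cast_nonneg k)]
  norm_cast

end LSeries

lemma exists_natCast_cpow_neg_mul_I_eq_exp {k : ℕ} (hk : 1 < k) (θ : ℝ) :
    ∃ t : ℝ, (k : ℂ) ^ (-(t * I)) = exp (θ * I) := by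
  have hlog : Complex.log k ≠ 0 := by
    rw [← natCast_log]; exact_mod_cast (Real.log_pos (by exact_mod_cast hk)).ne'
  refine ⟨-θ / Real.log k, ?_⟩
  rw [cpow_def_of_ne_zero (by exact_mod_cast (zero_lt_one.trans hk).ne')]
  congr 1
  push_cast
  field_simp

lemma exists_sameRay_mul_natCast_cpow_neg_mul_I (z w : ℂ) {k : ℕ} (hk : 1 < k) :
    ∃ t : ℝ, SameRay ℝ z (w * (k : ℂ) ^ (-(t * I))) := by
  obtain ⟨t, ht⟩ := exists_natCast_cpow_neg_mul_I_eq_exp hk (arg z - arg w)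
  refine ⟨t, ?_⟩
  have hw : w * (k : ℂ) ^ (-(t * I)) = ‖w‖ • exp (arg z * I) := by
    rw [ht, real_smul]
    nth_rewrite 1 [← norm_mul_exp_arg_mul_I w]
    rw [mul_assoc, ← exp_add]
    push_cast
    ring_nf
  rw [hw]
  conv_lhs => rw [← norm_mul_exp_arg_mul_I z, ← real_smul]
  exact ((SameRay.refl (R := ℝ) (exp (arg z * I))).nonneg_smul_left
    (norm_nonneg z)).nonneg_smul_right (norm_nonneg w)

lemma norm_lt_norm_of_sameRay {z c y : ℂ} (hzc : SameRay ℝ z c) {r : ℝ} (hr : 0 < r)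
    (hy : ‖(r : ℂ) * (y - z) - c‖ < ‖c‖) : ‖z‖ < ‖y‖ := by
  set ε := (r : ℂ) * (y - z) - c
  -- `y = z + r⁻¹ (c + ε)`: moving along the ray of `z` gains `r⁻¹ ‖c‖`, the error costs less.
  have hy' : y = (z + (r⁻¹ : ℝ) • c) + (r⁻¹ : ℝ) • ε := by
    have hr' : (r : ℂ) ≠ 0 := ofReal_ne_zero.mpr hr.ne'
    simp only [ε, real_smul]; push_cast; field_simp; ring
  have hray : ‖z + (r⁻¹ : ℝ) • c‖ = ‖z‖ + r⁻¹ * ‖c‖ := by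
    rw [(hzc.nonneg_smul_right (inv_nonneg.mpr hr.le)).norm_add, norm_smul,
      Real.norm_of_nonneg (inv_nonneg.mpr hr.le)]
  have hε : r⁻¹ * ‖ε‖ < r⁻¹ * ‖c‖ := mul_lt_mul_of_pos_left hy (inv_pos.mpr hr)
  calc ‖z‖ < ‖z + (r⁻¹ : ℝ) • c‖ - ‖(r⁻¹ : ℝ) • ε‖ := by
        rw [hray, norm_smul, Real.norm_of_nonneg (inv_nonneg.mpr hr.le)]; linarith
    _ ≤ ‖y‖ := by rw [hy']; exact norm_sub_le_norm_add _ _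

theorem stmt_13 (a : ℕ → ℂ) (σ : ℝ)
    (hconv : ∀ s : ℂ, σ < s.re → Summable (fun n : ℕ => a (n + 1) * ((n + 1 : ℕ) : ℂ) ^ (-s)))
    (hnonconst : ∃ k : ℕ, 2 ≤ k ∧ a k ≠ 0) :
    ∃ s : ℂ, σ < s.re ∧ ‖a 1‖ < ‖∑' n : ℕ, a (n + 1) * ((n + 1 : ℕ) : ℂ) ^ (-s)‖ := by
  classical
  obtain ⟨k, ⟨hk, hak⟩, hmin⟩ : ∃ k, (2 ≤ k ∧ a k ≠ 0) ∧ ∀ m, 2 ≤ m → m < k → a m = 0 :=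
    ⟨Nat.find hnonconst, Nat.find_spec hnonconst, fun m hm hmk ↦
      not_not.mp fun h ↦ Nat.find_min hnonconst hmk ⟨hm, h⟩⟩
  obtain ⟨t, hray⟩ := exists_sameRay_mul_natCast_cpow_neg_mul_I (a 1) (a k) hk
  set g : ℕ → ℂ := fun n ↦ a n * (n : ℂ) ^ (-(t * I)) with hg
  have hga : abscissaOfAbsConv g < ⊤ := by
    refine (LSeriesSummable.abscissaOfAbsConv_le (s := (σ + 1 : ℝ)) ?_).trans_lt
      (EReal.coe_lt_top _)
    rw [LSeriesSummable_mul_cpow_neg_iff, ← summable_add_one_iff_LSeriesSummable]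
    exact hconv _ (by simp)
  have hlim := tendsto_rpow_mul_sub_atTop hk (fun m hm hmk ↦ by simp [hg, hmin m hm hmk]) hga
  have hgk : g k ≠ 0 :=
    mul_ne_zero hak (cpow_ne_zero_iff.mpr (.inl (by exact_mod_cast (by omega : k ≠ 0))))
  obtain ⟨x, hx, hxσ⟩ := ((hlim.eventually (Metric.ball_mem_nhds _ (norm_pos_iff.mpr hgk))).and
    (eventually_gt_atTop σ)).exists
  refine ⟨x + t * I, by simpa using hxσ, ?_⟩
  rw [tsum_add_one_eq_LSeries, ← LSeries_mul_cpow_neg]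
  have hg1 : g 1 = a 1 := by simp [hg]
  rw [dist_eq_norm, hg1] at hx
  exact norm_lt_norm_of_sameRay hray (by positivity) hx
end

section
/- Let φ : ℂ → ℂ be continuous on all of ℂ, and for every R > 0 let the function s ↦ φ(√2 · R · 2^{s}) be holomorphic on {s | re s > 1/2} (where 2^{s} = exp(s log 2)). If additionally φ is bounded on a neighborhood of 0 minus {0}, then φ is entire. -/
/-! Since `√2 R · 2^s = exp (log (√2 R) + s log 2)`, the hypothesis says that `φ ∘ exp` is
holomorphic on the half-plane `re t > log (2R)`; letting `R → 0` and using that `exp` is locally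
biholomorphic, `φ` is holomorphic on `ℂ ∖ {0}`. Continuity at `0` then removes the singularity. -/

open Complex Filter Topology

theorem differentiableAt_exp_of_comp_exp {f : ℂ → ℂ} {s : ℂ}
    (h : DifferentiableAt ℂ (f ∘ exp) s) : DifferentiableAt ℂ f (exp s) := by
  -- `w ↦ log (w / exp s) + s` is a local inverse of `exp` at `exp s`, differentiable there.
  set g : ℂ → ℂ := fun w => log (w / exp s) + s
  have hg : DifferentiableAt ℂ g (exp s) :=
    ((differentiableAt_log (by simp [exp_ne_zero])).comp _ (by fun_prop)).add_const s
  have hgs : g (exp s) = s := by simp [g, exp_ne_zero]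
  have hexp_g : ∀ᶠ w in 𝓝 (exp s), exp (g w) = w := by
    filter_upwards [isOpen_compl_singleton.mem_nhds (exp_ne_zero s)] with w hw
    simp [g, exp_add, exp_log (div_ne_zero hw (exp_ne_zero s)), exp_ne_zero]
  refine ((hgs ▸ h).comp (exp s) hg).congr_of_eventuallyEq ?_
  filter_upwards [hexp_g] with w hw
  simp [hw]

theorem differentiableAt_mul_exp_of_comp_mul_exp {f : ℂ → ℂ} {c L s : ℂ} (hc : c ≠ 0) (hL : L ≠ 0)
    (h : DifferentiableAt ℂ (fun s => f (c * exp (s * L))) s) :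
    DifferentiableAt ℂ f (c * exp (s * L)) := by
  have hcomp : f ∘ exp = (fun s => f (c * exp (s * L))) ∘ fun t => (t - log c) / L := by
    ext t
    simp [div_mul_cancel₀ _ hL, exp_sub, exp_log hc, mul_div_cancel₀ _ hc]
  have hrepr : c * exp (s * L) = exp (log c + s * L) := by rw [exp_add, exp_log hc]
  rw [hrepr]
  refine differentiableAt_exp_of_comp_exp (hcomp ▸ DifferentiableAt.comp _ ?_ (by fun_prop))
  simpa [hL] using h

theorem differentiableAt_of_differentiableOn_comp_exp {φ : ℂ → ℂ}
    (hhol : ∀ R : ℝ, 0 < R →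
      DifferentiableOn ℂ
        (fun s => φ ((Real.sqrt 2 * R : ℝ) * exp (s * (Real.log 2 : ℂ))))
        {s : ℂ | 1 / 2 < s.re})
    {z : ℂ} (hz : z ≠ 0) : DifferentiableAt ℂ φ z := by
  have hz' : 0 < ‖z‖ := norm_pos_iff.mpr hz
  set c : ℝ := Real.sqrt 2 * (‖z‖ / 4)
  have hc : 0 < c := by positivity
  have hlog2 : 0 < Real.log 2 := Real.log_pos one_lt_two
  set s : ℂ := (log z - Real.log c) / Real.log 2
  have hs : 1 / 2 < s.re := by
    have hsqrt : Real.log (Real.sqrt 2) = Real.log 2 / 2 := by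
      rw [Real.log_sqrt zero_le_two]
    have hratio : Real.sqrt 2 < ‖z‖ / c := by
      rw [lt_div_iff₀ hc, ← mul_assoc, Real.mul_self_sqrt zero_le_two]
      linarith
    have hre : s.re = Real.log (‖z‖ / c) / Real.log 2 := by
      rw [Real.log_div hz'.ne' hc.ne', div_ofReal_re, sub_re, log_re, ofReal_re]
    rw [hre, lt_div_iff₀ hlog2]
    linarith [Real.log_lt_log (by positivity) hratio]
  have hzs : z = c * exp (s * Real.log 2) := by
    have hcC : (c : ℂ) ≠ 0 := by exact_mod_cast hc.ne'
    rw [div_mul_cancel₀ _ (by exact_mod_cast hlog2.ne'), ofReal_log hc.le, exp_sub, exp_log hz,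
      exp_log hcC, mul_div_cancel₀ _ hcC]
  rw [hzs]
  refine differentiableAt_mul_exp_of_comp_mul_exp (by exact_mod_cast hc.ne')
    (by exact_mod_cast hlog2.ne') ?_
  exact (hhol _ (by positivity)).differentiableAt
    ((isOpen_lt continuous_const continuous_re).mem_nhds hs)

theorem stmt_16_general (φ : ℂ → ℂ)
    (hcont : Continuous φ)
    (hhol : ∀ R : ℝ, 0 < R →
      DifferentiableOn ℂ
        (fun s => φ ((Real.sqrt 2 * R : ℝ) * Complex.exp (s * (Real.log 2 : ℂ))))
        {s : ℂ | 1 / 2 < s.re}) :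
    Differentiable ℂ φ := by
  have hne : ∀ z ≠ 0, DifferentiableAt ℂ φ z := fun _ hz ↦
    differentiableAt_of_differentiableOn_comp_exp hhol hz
  intro z
  rcases eq_or_ne z 0 with rfl | hz
  · exact (analyticAt_of_differentiable_on_punctured_nhds_of_continuousAt
      (eventually_nhdsWithin_of_forall hne) hcont.continuousAt).differentiableAt
  · exact hne z hz

theorem stmt_16 (φ : ℂ → ℂ)
    (hcont : Continuous φ)
    (hhol : ∀ R : ℝ, 0 < R →
      DifferentiableOn ℂ
        (fun s => φ ((Real.sqrt 2 * R : ℝ) * Complex.exp (s * (Real.log 2 : ℂ))))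
        {s : ℂ | 1 / 2 < s.re})
    (hbdd : ∃ δ > (0 : ℝ), ∃ M : ℝ, ∀ z : ℂ, z ≠ 0 → ‖z‖ < δ → ‖φ z‖ ≤ M) :
    Differentiable ℂ φ :=
  stmt_16_general φ hcont hhol
end
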